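/- arXiv:2410.16384 — 4 statements merged into one kernel-verified Lean document; each statement's English description precedes it below -/
import Mathlib

section
/- Let $u,v:\mathbb{R}^n\to\mathbb{R}$ be twice differentiable at $x_0$, and for $t\in[0,1]$ set $w_t=v+t(u-v)$. Define the conformal Hessian $A[\varphi]=e^{-2\varphi}(-\nabla^2\varphi+\nabla\varphi\otimes\nabla\varphi-\tfrac12|\nabla\varphi|^2 I)$. Then at $x_0$, $A[w_t]=t e^{2(1-t)(u-v)}A[u]+(1-t)e^{-2t(u-v)}A[v]+\mathcal{C}$, where $\mathcal{C}=t(1-t)e^{-2w_t}(\tfrac12|\nabla(u-v)|^2 I-\nabla(u-v)\otimes\nabla(u-v))$. -/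
open scoped BigOperators

noncomputable def pd (n : ℕ) (v : (Fin n → ℝ) → ℝ) (x : Fin n → ℝ) (i : Fin n) : ℝ :=
  fderiv ℝ v x (Pi.single i 1)

noncomputable def pd2 (n : ℕ) (v : (Fin n → ℝ) → ℝ) (x : Fin n → ℝ) (i j : Fin n) : ℝ :=
  fderiv ℝ (fun y => fderiv ℝ v y (Pi.single j 1)) x (Pi.single i 1)

/-- Conformal Hessian `A[v] = e^{-2v}(-∇²v + ∇v⊗∇v - ½|∇v|² I)`. -/
noncomputable def Amat (n : ℕ) (v : (Fin n → ℝ) → ℝ) (x : Fin n → ℝ) :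
    Matrix (Fin n) (Fin n) ℝ :=
  Matrix.of fun i j =>
    Real.exp (-(2 * v x)) *
      (-(pd2 n v x i j) + pd n v x i * pd n v x j
        - (1/2) * (∑ k, (pd n v x k)^2) * (if i = j then 1 else 0))

/-- `k`-th elementary symmetric function of the eigenvalues of a symmetric matrix,
expressed as the sum of its principal `k×k` minors. -/
noncomputable def sigmaP (m : ℕ) (k : ℕ) (M : Matrix (Fin m) (Fin m) ℝ) : ℝ :=
  ∑ t ∈ Finset.univ.powersetCard k,
    Matrix.det (Matrix.of fun i j : {x // x ∈ t} => M i.1 j.1)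

/-!
Write `A[φ] = e^{-2φ} B[φ]` with `B[φ] = -∇²φ + ∇φ⊗∇φ - ½|∇φ|² I`. Along `w_t = v + t(u - v)` the
first and second derivatives are affine in `t`, and every quadratic term obeys
`(b + t(a - b))(b' + t(a' - b')) = t a a' + (1 - t) b b' - t(1 - t)(a - b)(a' - b')`, so
`B[w_t] = t B[u] + (1 - t) B[v] + t(1 - t)(½|∇(u - v)|² I - ∇(u - v)⊗∇(u - v))`.
The weights come from `e^{-2w_t} = e^{2(1-t)(u-v)} e^{-2u} = e^{-2t(u-v)} e^{-2v}`.
-/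

section Segment

variable {E : Type*} [NormedAddCommGroup E] [NormedSpace ℝ E] {u v : E → ℝ} {y : E}

theorem fderiv_segment (hu : DifferentiableAt ℝ u y) (hv : DifferentiableAt ℝ v y) (t : ℝ) :
    fderiv ℝ (fun x => v x + t * (u x - v x)) y
      = fderiv ℝ v y + t • (fderiv ℝ u y - fderiv ℝ v y) :=
  (hv.hasFDerivAt.add ((hu.hasFDerivAt.sub hv.hasFDerivAt).const_mul t)).fderiv

end Segment

theorem Finset.sum_sq_segment {ι R : Type*} [CommRing R] (s : Finset ι) (a b : ι → R) (t : R) :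
    ∑ k ∈ s, (b k + t * (a k - b k)) ^ 2
      = t * ∑ k ∈ s, a k ^ 2 + (1 - t) * ∑ k ∈ s, b k ^ 2
        - t * (1 - t) * ∑ k ∈ s, (a k - b k) ^ 2 := by
  simp only [Finset.mul_sum, ← Finset.sum_add_distrib, ← Finset.sum_sub_distrib]
  exact Finset.sum_congr rfl fun k _ => by ring

section PartialDerivatives

variable {n : ℕ} {u v : (Fin n → ℝ) → ℝ} {x : Fin n → ℝ}

theorem pd2_eq_pd_pd (i j : Fin n) : pd2 n u x i j = pd n (fun y => pd n u y j) x i := rfl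

theorem ContDiffAt.differentiableAt_pd (hu : ContDiffAt ℝ 2 u x) (j : Fin n) :
    DifferentiableAt ℝ (fun y => pd n u y j) x :=
  ((hu.fderiv_right (m := 1) (by norm_num)).differentiableAt one_ne_zero).clm_apply
    (differentiableAt_const _)

theorem pd_segment (hu : DifferentiableAt ℝ u x) (hv : DifferentiableAt ℝ v x) (t : ℝ)
    (i : Fin n) :
    pd n (fun y => v y + t * (u y - v y)) x i = pd n v x i + t * (pd n u x i - pd n v x i) := by
  simp [pd, fderiv_segment hu hv]

theorem pd2_segment (hu : ContDiffAt ℝ 2 u x) (hv : ContDiffAt ℝ 2 v x) (t : ℝ) (i j : Fin n) :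
    pd2 n (fun y => v y + t * (u y - v y)) x i j
      = pd2 n v x i j + t * (pd2 n u x i j - pd2 n v x i j) := by
  have hpd_near : (fun y => pd n (fun y => v y + t * (u y - v y)) y j)
      =ᶠ[nhds x] fun y => pd n v y j + t * (pd n u y j - pd n v y j) := by
    filter_upwards [hu.eventually (by simp), hv.eventually (by simp)] with y hu' hv'
    exact pd_segment (hu'.differentiableAt two_ne_zero) (hv'.differentiableAt two_ne_zero) t j
  rw [pd2_eq_pd_pd, pd, hpd_near.fderiv_eq]
  exact pd_segment (hu.differentiableAt_pd j) (hv.differentiableAt_pd j) t i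

end PartialDerivatives

noncomputable def conformalHessianCore (n : ℕ) (v : (Fin n → ℝ) → ℝ) (x : Fin n → ℝ) :
    Matrix (Fin n) (Fin n) ℝ :=
  Matrix.of fun i j =>
    -(pd2 n v x i j) + pd n v x i * pd n v x j
      - (1/2) * (∑ k, (pd n v x k)^2) * (if i = j then 1 else 0)

theorem Amat_eq_exp_smul (n : ℕ) (v : (Fin n → ℝ) → ℝ) (x : Fin n → ℝ) :
    Amat n v x = Real.exp (-(2 * v x)) • conformalHessianCore n v x :=
  rfl

theorem conformalHessianCore_segment {n : ℕ} {u v : (Fin n → ℝ) → ℝ} {x : Fin n → ℝ}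
    (hu : ContDiffAt ℝ 2 u x) (hv : ContDiffAt ℝ 2 v x) (t : ℝ) :
    conformalHessianCore n (fun y => v y + t * (u y - v y)) x
      = t • conformalHessianCore n u x + (1 - t) • conformalHessianCore n v x
        + (t * (1 - t)) • Matrix.of (fun i j =>
            (1/2) * (∑ k, (pd n u x k - pd n v x k)^2) * (if i = j then (1:ℝ) else 0)
              - (pd n u x i - pd n v x i) * (pd n u x j - pd n v x j)) := by
  ext i j
  simp only [conformalHessianCore, Matrix.add_apply, Matrix.smul_apply, Matrix.of_apply,
    smul_eq_mul, pd_segment (hu.differentiableAt two_ne_zero) (hv.differentiableAt two_ne_zero),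
    pd2_segment hu hv, Finset.sum_sq_segment]
  ring

theorem conformal_hessian_convex_combination_general
    (n : ℕ) (u v : (Fin n → ℝ) → ℝ) (x0 : Fin n → ℝ)
    (hu : ContDiffAt ℝ 2 u x0) (hv : ContDiffAt ℝ 2 v x0)
    (t : ℝ) :
    Amat n (fun x => v x + t * (u x - v x)) x0
      = (t * Real.exp (2 * (1 - t) * (u x0 - v x0))) • Amat n u x0
        + ((1 - t) * Real.exp (-(2 * t * (u x0 - v x0)))) • Amat n v x0
        + (t * (1 - t) * Real.exp (-(2 * (v x0 + t * (u x0 - v x0))))) •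
            Matrix.of (fun i j =>
              (1/2) * (∑ k, (pd n u x0 k - pd n v x0 k)^2) * (if i = j then (1:ℝ) else 0)
                - (pd n u x0 i - pd n v x0 i) * (pd n u x0 j - pd n v x0 j)) := by
  have hexp_u : Real.exp (2 * (1 - t) * (u x0 - v x0)) * Real.exp (-(2 * u x0))
      = Real.exp (-(2 * (v x0 + t * (u x0 - v x0)))) := by rw [← Real.exp_add]; ring_nf
  have hexp_v : Real.exp (-(2 * t * (u x0 - v x0))) * Real.exp (-(2 * v x0))
      = Real.exp (-(2 * (v x0 + t * (u x0 - v x0)))) := by rw [← Real.exp_add]; ring_nf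
  simp only [Amat_eq_exp_smul, conformalHessianCore_segment hu hv, smul_smul]
  linear_combination (norm := module)
    (-t • hexp_u) • conformalHessianCore n u x0 - ((1 - t) • hexp_v) • conformalHessianCore n v x0

/-- Algebraic identity for the conformal Hessian along the segment
`w_t = v + t(u-v)`: at a point of twice differentiability,
`A[w_t] = t e^{2(1-t)(u-v)} A[u] + (1-t) e^{-2t(u-v)} A[v] + 𝒞`. -/
theorem conformal_hessian_convex_combination
    (n : ℕ) (u v : (Fin n → ℝ) → ℝ) (x0 : Fin n → ℝ)
    (hu : ContDiffAt ℝ 2 u x0) (hv : ContDiffAt ℝ 2 v x0)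
    (t : ℝ) (ht : t ∈ Set.Icc (0:ℝ) 1) :
    Amat n (fun x => v x + t * (u x - v x)) x0
      = (t * Real.exp (2 * (1 - t) * (u x0 - v x0))) • Amat n u x0
        + ((1 - t) * Real.exp (-(2 * t * (u x0 - v x0)))) • Amat n v x0
        + (t * (1 - t) * Real.exp (-(2 * (v x0 + t * (u x0 - v x0))))) •
            Matrix.of (fun i j =>
              (1/2) * (∑ k, (pd n u x0 k - pd n v x0 k)^2) * (if i = j then (1:ℝ) else 0)
                - (pd n u x0 i - pd n v x0 i) * (pd n u x0 j - pd n v x0 j)) :=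
  conformal_hessian_convex_combination_general n u v x0 hu hv t
end

section
/- For $n\geq 2$ and integers $1\leq k\leq n/2$, if $q\in\mathbb{R}^n$, then the matrix $\tfrac12|q|^2 I - q\otimes q$ lies in $\overline{\Gamma_k}$, i.e. $\sigma_i$ of its eigenvalues is nonnegative for all $1\leq i\leq k$. -/
open scoped BigOperators

/-!
Writing `c = |q|²/2`, the matrix is `c I - q qᵀ`. Its principal `i × i` minor on an index set `t`
is `cⁱ - (∑_{a ∈ t} q_a²) cⁱ⁻¹` (determinant of a scalar minus a rank-one matrix), and each index
lies in `C(n-1, i-1)` of the `i`-subsets, so `σᵢ = (C(n,i) - 2 C(n-1,i-1)) cⁱ`. Since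
`i C(n,i) = n C(n-1,i-1)`, the bracket is nonnegative exactly when `2i ≤ n`.
-/

open Finset Matrix

theorem Matrix.det_scalar_sub_vecMulVec {ι R : Type*} [Fintype ι] [DecidableEq ι] [CommRing R]
    (c : R) (u v : ι → R) :
    (scalar ι c - vecMulVec u v).det
      = c ^ Fintype.card ι - (u ⬝ᵥ v) * c ^ (Fintype.card ι - 1) := by
  rw [← eval_charpoly, charpoly_vecMulVec]
  simp

theorem Finset.card_filter_mem_powersetCard {α : Type*} [DecidableEq α] {s : Finset α} {a : α}
    (ha : a ∈ s) {k : ℕ} (hk : 1 ≤ k) :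
    #{t ∈ s.powersetCard k | a ∈ t} = (#s - 1).choose (k - 1) := by
  rw [← card_erase_of_mem ha, ← card_powersetCard]
  refine card_nbij' (·.erase a) (insert a) ?_ ?_ ?_ ?_ <;> intro t ht <;>
    simp only [mem_coe, mem_filter, mem_powersetCard] at ht
  · have hat : a ∈ t := ht.2
    simp only [mem_coe, mem_powersetCard]
    exact ⟨erase_subset_erase a ht.1.1, by rw [card_erase_of_mem hat, ht.1.2]⟩
  · have hat : a ∉ t := fun h => notMem_erase a s (ht.1 h)
    simp only [mem_coe, mem_filter, mem_powersetCard, mem_insert_self, and_true]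
    refine ⟨insert_subset ha (ht.1.trans (erase_subset a s)), ?_⟩
    rw [card_insert_of_notMem hat, ht.2]
    omega
  · exact insert_erase ht.2
  · exact erase_insert fun h => notMem_erase a s (ht.1 h)

theorem Finset.sum_powersetCard_sum {α M : Type*} [DecidableEq α] [AddCommMonoid M]
    (s : Finset α) {k : ℕ} (hk : 1 ≤ k) (g : α → M) :
    ∑ t ∈ s.powersetCard k, ∑ a ∈ t, g a = (#s - 1).choose (k - 1) • ∑ a ∈ s, g a := by
  calc ∑ t ∈ s.powersetCard k, ∑ a ∈ t, g a
      = ∑ a ∈ s, ∑ t ∈ s.powersetCard k with a ∈ t, g a := by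
        rw [sum_comm' (t' := s) (s' := fun a => {t ∈ s.powersetCard k | a ∈ t})]
        exact fun t a => ⟨fun h => ⟨mem_filter.2 h, (mem_powersetCard.1 h.1).1 h.2⟩,
          fun h => mem_filter.1 h.1⟩
    _ = ∑ a ∈ s, (#s - 1).choose (k - 1) • g a := by
        refine sum_congr rfl fun a ha => ?_
        rw [sum_const, card_filter_mem_powersetCard ha hk]
    _ = _ := (smul_sum ..).symm

theorem Nat.two_mul_choose_pred_le_choose {n i : ℕ} (hi : 1 ≤ i) (hin : 2 * i ≤ n) :
    2 * (n - 1).choose (i - 1) ≤ n.choose i := by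
  have key : n * (n - 1).choose (i - 1) = n.choose i * i := by
    obtain ⟨m, rfl⟩ : ∃ m, n = m + 1 := ⟨n - 1, by omega⟩
    obtain ⟨j, rfl⟩ : ∃ j, i = j + 1 := ⟨i - 1, by omega⟩
    exact Nat.add_one_mul_choose_eq m j
  refine Nat.le_of_mul_le_mul_right ?_ hi
  calc 2 * (n - 1).choose (i - 1) * i = 2 * i * (n - 1).choose (i - 1) := by ring
    _ ≤ n * (n - 1).choose (i - 1) := Nat.mul_le_mul_right _ hin
    _ = n.choose i * i := key

theorem sigmaP_scalar_sub_vecMulVec (m : ℕ) {k : ℕ} (hk : 1 ≤ k) (c : ℝ) (q : Fin m → ℝ) :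
    sigmaP m k (scalar (Fin m) c - vecMulVec q q)
      = m.choose k * c ^ k - (m - 1).choose (k - 1) * (q ⬝ᵥ q) * c ^ (k - 1) := by
  have minor : ∀ t ∈ (univ : Finset (Fin m)).powersetCard k,
      (of fun i j : t => (scalar (Fin m) c - vecMulVec q q) i.1 j.1).det
        = c ^ k - (∑ a ∈ t, q a * q a) * c ^ (k - 1) := by
    intro t ht
    have hminor : (of fun i j : t => (scalar (Fin m) c - vecMulVec q q) i.1 j.1)
        = scalar t c - vecMulVec (fun i : t => q i) (fun i : t => q i) := by
      ext i j
      simp only [of_apply, Matrix.sub_apply, scalar_apply, diagonal_apply, vecMulVec_apply,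
        Subtype.ext_iff]
    rw [hminor, det_scalar_sub_vecMulVec, Fintype.card_coe, (mem_powersetCard.mp ht).2,
      dotProduct, sum_coe_sort t fun a => q a * q a]
  rw [sigmaP, sum_congr rfl minor, sum_sub_distrib, ← sum_mul, sum_powersetCard_sum _ hk,
    sum_const, card_powersetCard, card_univ, Fintype.card_fin, dotProduct]
  simp only [nsmul_eq_mul]

theorem half_normSq_id_sub_outer_mem_closed_gamma_k_general
    (n k : ℕ) (hkn : 2 * k ≤ n) (q : Fin n → ℝ) :
    ∀ i, 1 ≤ i → i ≤ k →
      0 ≤ sigmaP n i (Matrix.of fun i j =>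
        (1/2) * (∑ m, q m ^ 2) * (if i = j then (1:ℝ) else 0) - q i * q j) := by
  intro i hi hik
  set c : ℝ := (1 / 2) * ∑ m, q m ^ 2
  have hq : q ⬝ᵥ q = 2 * c := by simp [c, dotProduct, sq]
  have hM : (Matrix.of fun i j =>
      c * (if i = j then (1:ℝ) else 0) - q i * q j) = scalar (Fin n) c - vecMulVec q q := by
    ext i j
    simp [vecMulVec_apply, diagonal_apply]
  have hchoose : (2 * (n - 1).choose (i - 1) : ℝ) ≤ n.choose i := by
    exact_mod_cast Nat.two_mul_choose_pred_le_choose hi (by omega)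
  rw [hM, sigmaP_scalar_sub_vecMulVec n hi, hq]
  calc (0 : ℝ) ≤ (n.choose i - 2 * (n - 1).choose (i - 1)) * c ^ i :=
        mul_nonneg (sub_nonneg.2 hchoose) (pow_nonneg (by positivity) i)
    _ = _ := by rw [← mul_pow_sub_one (by omega) c]; ring

/-- For `n ≥ 2` and `1 ≤ k ≤ n/2`, the matrix `½|q|² I - q⊗q` lies in the closed
Garding cone `Γ̄_k`: all elementary symmetric functions `σ_i` of its eigenvalues,
`1 ≤ i ≤ k`, are nonnegative. -/
theorem half_normSq_id_sub_outer_mem_closed_gamma_k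
    (n k : ℕ) (hn : 2 ≤ n) (hk : 1 ≤ k) (hkn : 2 * k ≤ n) (q : Fin n → ℝ) :
    ∀ i, 1 ≤ i → i ≤ k →
      0 ≤ sigmaP n i (Matrix.of fun i j =>
        (1/2) * (∑ m, q m ^ 2) * (if i = j then (1:ℝ) else 0) - q i * q j) :=
  half_normSq_id_sub_outer_mem_closed_gamma_k_general n k hkn q
end

section
/- Let $n\geq 2$ and let $\Gamma\subsetneq\mathbb{R}^n$ be a nonempty open symmetric convex cone with vertex at the origin satisfying $\Gamma+\Gamma_n\subset\Gamma$, and assume $-\lambda^*\in\overline{\Gamma}$ where $\lambda^*=(1,-1,\dots,-1)$. If $u,v$ are $C^2$ near $x_0$ with eigenvalues $\lambda(A[u](x_0)),\lambda(A[v](x_0))\in\Gamma$, then $\lambda(A[u+t(v-u)](x_0))\in\Gamma$ for all $t\in[0,1]$. -/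
/-!
For `w = u + t(v - u)` the only non-affine terms of `e^{2w} A[w]` are the quadratic ones in `∇w`,
and with `b = ∇u - ∇v` one finds
`e^{2w} A[w] = (1 - t) e^{2u} A[u] + t e^{2v} A[v] + t(1 - t)(½|b|² I - b ⊗ b)`.
Read every term on the diagonal of an orthonormal eigenbasis `W` of the left-hand side.
The diagonal of `Wᵀ A[u] W` is a doubly stochastic image of the spectrum of `A[u]`, hence
(Birkhoff) a convex combination of its permutations, so it lies in `Γ`; likewise for `v`.
With `c = Wᵀ b` the diagonal of the correction is `∑ⱼ (cⱼ²/2)(1, …, -1, …, 1)` (`-1` in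
slot `j`), a nonnegative combination of permutations of `-λ* ∈ Γ̄`. An open convex cone absorbs additions from its closure.
-/

open scoped BigOperators

open Matrix

section Cone

variable {E : Type*} [AddCommGroup E] [Module ℝ E] {Γ : Set E}

theorem smul_add_smul_mem_of_cone (hconv : Convex ℝ Γ)
    (hcone : ∀ x ∈ Γ, ∀ t : ℝ, 0 < t → t • x ∈ Γ) {x y : E} (hx : x ∈ Γ) (hy : y ∈ Γ)
    {a b : ℝ} (ha : 0 ≤ a) (hb : 0 ≤ b) (hab : 0 < a + b) : a • x + b • y ∈ Γ := by
  have h := hcone _ (convex_iff_div.mp hconv hx hy ha hb hab) (a + b) hab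
  rwa [smul_add, smul_smul, smul_smul, mul_div_cancel₀ _ hab.ne',
    mul_div_cancel₀ _ hab.ne'] at h

variable [TopologicalSpace E] [IsTopologicalAddGroup E] [ContinuousSMul ℝ E]

theorem add_mem_of_mem_closure_of_cone (hopen : IsOpen Γ) (hconv : Convex ℝ Γ)
    (hcone : ∀ x ∈ Γ, ∀ t : ℝ, 0 < t → t • x ∈ Γ) {x y : E} (hx : x ∈ Γ)
    (hy : y ∈ closure Γ) : x + y ∈ Γ := by
  have hmid : (2⁻¹ : ℝ) • x + (2⁻¹ : ℝ) • y ∈ Γ := by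
    simpa only [hopen.interior_eq] using hconv.combo_interior_closure_mem_interior
      (hopen.interior_eq.symm ▸ hx) hy (by norm_num) (by norm_num) (by norm_num)
  simpa [smul_add, smul_smul] using hcone _ hmid 2 two_pos

theorem add_sum_smul_mem_of_cone (hopen : IsOpen Γ) (hconv : Convex ℝ Γ)
    (hcone : ∀ x ∈ Γ, ∀ t : ℝ, 0 < t → t • x ∈ Γ) {ι : Type*} (s : Finset ι) {x : E}
    (hx : x ∈ Γ) {c : ι → ℝ} (hc : ∀ j ∈ s, 0 ≤ c j) {y : ι → E}
    (hy : ∀ j ∈ s, y j ∈ closure Γ) : x + ∑ j ∈ s, c j • y j ∈ Γ := by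
  classical
  induction s using Finset.induction_on with
  | empty => simpa using hx
  | insert j s hj ih =>
    rw [Finset.sum_insert hj, ← add_assoc, add_right_comm]
    have hs := ih (fun k hk => hc k (Finset.mem_insert_of_mem hk))
      (fun k hk => hy k (Finset.mem_insert_of_mem hk))
    rcases (hc j (Finset.mem_insert_self j s)).eq_or_lt with h0 | hpos
    · simpa [← h0] using hs
    · refine add_mem_of_mem_closure_of_cone hopen hconv hcone hs ?_
      exact map_mem_closure (continuous_const_smul (c j)) (hy j (Finset.mem_insert_self j s))
        fun z hz => hcone z hz _ hpos

end Cone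

section SchurHorn

variable {ι : Type*} {Γ : Set (ι → ℝ)}

theorem comp_perm_mem_closure (hsymm : ∀ σ : Equiv.Perm ι, ∀ x ∈ Γ, x ∘ σ ∈ Γ)
    (σ : Equiv.Perm ι) {x : ι → ℝ} (hx : x ∈ closure Γ) : x ∘ σ ∈ closure Γ :=
  map_mem_closure (f := fun y : ι → ℝ => y ∘ σ) (by fun_prop) hx (hsymm σ)

variable [Fintype ι] [DecidableEq ι]

theorem mulVec_mem_of_mem_doublyStochastic (hconv : Convex ℝ Γ)
    (hsymm : ∀ σ : Equiv.Perm ι, ∀ x ∈ Γ, x ∘ σ ∈ Γ) {S : Matrix ι ι ℝ}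
    (hS : S ∈ doublyStochastic ℝ ι) {μ : ι → ℝ} (hμ : μ ∈ Γ) : S *ᵥ μ ∈ Γ := by
  obtain ⟨w, hw0, hw1, rfl⟩ := exists_eq_sum_perm_of_mem_doublyStochastic hS
  simp only [Matrix.sum_mulVec, Matrix.smul_mulVec, permMatrix_mulVec]
  exact hconv.sum_mem (fun σ _ => hw0 σ) hw1 fun σ _ => hsymm σ μ hμ

theorem sq_transpose_mem_doublyStochastic {V : Matrix ι ι ℝ}
    (hV : V ∈ unitaryGroup ι ℝ) : (of fun i j => V j i ^ 2) ∈ doublyStochastic ℝ ι := by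
  have h1 := congrFun₂ (mem_unitaryGroup_iff.mp hV)
  have h2 := congrFun₂ (mem_unitaryGroup_iff'.mp hV)
  simp only [mul_apply, star_apply, star_trivial] at h1 h2
  refine mem_doublyStochastic_iff_sum.mpr ⟨fun i j => sq_nonneg _, fun i => ?_, fun j => ?_⟩
  · simpa [sq] using h2 i i
  · simpa [sq, mul_comm] using h1 j j

theorem diag_star_mul_diagonal_mul (V : Matrix ι ι ℝ) (μ : ι → ℝ) :
    diag (star V * diagonal μ * V) = (of fun i j => V j i ^ 2) *ᵥ μ := by
  ext i
  simp only [diag_apply, mul_apply, star_apply, star_trivial, diagonal_apply, mul_ite, mul_zero,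
    Finset.sum_ite_eq', Finset.mem_univ, if_true, mulVec, dotProduct, of_apply]
  exact Finset.sum_congr rfl fun j _ => by ring

theorem diag_conj_mem_of_eq_conj_diagonal (hconv : Convex ℝ Γ)
    (hsymm : ∀ σ : Equiv.Perm ι, ∀ x ∈ Γ, x ∘ σ ∈ Γ) {μ : ι → ℝ} (hμ : μ ∈ Γ)
    {U : Matrix ι ι ℝ} (hU : U ∈ unitaryGroup ι ℝ) {W : Matrix ι ι ℝ}
    (hW : W ∈ unitaryGroup ι ℝ) : diag (star W * (U * diagonal μ * star U) * W) ∈ Γ := by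
  have hV : star U * W ∈ unitaryGroup ι ℝ := Submonoid.mul_mem _ (Unitary.star_mem hU) hW
  have hconj : star W * (U * diagonal μ * star U) * W
      = star (star U * W) * diagonal μ * (star U * W) := by
    simp only [star_mul, star_star, Matrix.mul_assoc]
  rw [hconj, diag_star_mul_diagonal_mul]
  exact mulVec_mem_of_mem_doublyStochastic hconv hsymm (sq_transpose_mem_doublyStochastic hV) hμ

theorem Matrix.IsHermitian.eigenvalues_eq_diag_conj {M : Matrix ι ι ℝ} (hM : M.IsHermitian) :
    hM.eigenvalues = diag (star (hM.eigenvectorUnitary : Matrix ι ι ℝ) * M *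
      (hM.eigenvectorUnitary : Matrix ι ι ℝ)) := by
  have h := hM.conjStarAlgAut_star_eigenvectorUnitary
  rw [Unitary.conjStarAlgAut_star_apply, RCLike.ofReal_real_eq_id, Function.id_comp] at h
  rw [h, diag_diagonal]

theorem diag_conj_mem_of_eigenvalues_mem (hconv : Convex ℝ Γ)
    (hsymm : ∀ σ : Equiv.Perm ι, ∀ x ∈ Γ, x ∘ σ ∈ Γ) {M : Matrix ι ι ℝ} (hM : M.IsHermitian)
    (hMΓ : hM.eigenvalues ∈ Γ) {W : Matrix ι ι ℝ} (hW : W ∈ unitaryGroup ι ℝ) :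
    diag (star W * M * W) ∈ Γ := by
  have h := hM.spectral_theorem
  rw [RCLike.ofReal_real_eq_id, Function.id_comp, Unitary.conjStarAlgAut_apply] at h
  rw [h]
  exact diag_conj_mem_of_eq_conj_diagonal hconv hsymm hMΓ hM.eigenvectorUnitary.2 hW

end SchurHorn

section RankOne

variable {ι : Type*} [Fintype ι] [DecidableEq ι]

noncomputable def rankOneCorrection (b : ι → ℝ) : Matrix ι ι ℝ :=
  (2⁻¹ * (b ⬝ᵥ b)) • 1 - vecMulVec b b

theorem isHermitian_rankOneCorrection (b : ι → ℝ) : (rankOneCorrection b).IsHermitian :=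
  (isHermitian_one.smul (.all _)).sub <| by
    rw [IsHermitian, conjTranspose_vecMulVec, star_trivial]

theorem star_mul_rankOneCorrection_mul {W : Matrix ι ι ℝ} (hW : W ∈ unitaryGroup ι ℝ)
    (b : ι → ℝ) : star W * rankOneCorrection b * W = rankOneCorrection (b ᵥ* W) := by
  have hWt : star W = Wᵀ := conjTranspose_eq_transpose_of_trivial W
  have hmv : star W *ᵥ b = b ᵥ* W := by rw [hWt, mulVec_transpose]
  have hdot : (b ᵥ* W) ⬝ᵥ (b ᵥ* W) = b ⬝ᵥ b := by
    rw [← dotProduct_mulVec, ← hmv, mulVec_mulVec, mem_unitaryGroup_iff.mp hW, one_mulVec]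
  rw [rankOneCorrection, rankOneCorrection, Matrix.mul_sub, Matrix.sub_mul, Matrix.mul_smul,
    Matrix.smul_mul, Matrix.mul_one, mem_unitaryGroup_iff'.mp hW, mul_vecMulVec, vecMulVec_mul,
    hmv, hdot]

theorem diag_rankOneCorrection (c : ι → ℝ) :
    diag (rankOneCorrection c) = ∑ j, (c j ^ 2 / 2) • fun i => if i = j then -1 else 1 := by
  ext i
  have hsplit : ∀ j, c j ^ 2 / 2 * (if i = j then -1 else 1)
      = c j ^ 2 / 2 - if i = j then c j ^ 2 else 0 := fun j => by split_ifs <;> ring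
  simp only [Finset.sum_apply, Pi.smul_apply, smul_eq_mul]
  rw [Finset.sum_congr rfl fun j _ => hsplit j, Finset.sum_sub_distrib, Finset.sum_ite_eq,
    if_pos (Finset.mem_univ i), ← Finset.sum_div]
  simp only [rankOneCorrection, diag_apply, Matrix.sub_apply, Matrix.smul_apply, one_apply_eq,
    vecMulVec_apply, smul_eq_mul, dotProduct, sq]
  ring

end RankOne

section Admissible

variable {ι : Type*} [Fintype ι] [DecidableEq ι] {Γ : Set (ι → ℝ)}

theorem eigenvalues_smul_add_smul_add_rankOneCorrection_mem (hopen : IsOpen Γ)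
    (hconv : Convex ℝ Γ) (hcone : ∀ x ∈ Γ, ∀ t : ℝ, 0 < t → t • x ∈ Γ)
    (hsymm : ∀ σ : Equiv.Perm ι, ∀ x ∈ Γ, x ∘ σ ∈ Γ)
    (hflip : ∀ j, (fun i => if i = j then (-1 : ℝ) else 1) ∈ closure Γ)
    {A B : Matrix ι ι ℝ} (hA : A.IsHermitian) (hB : B.IsHermitian)
    (hAΓ : hA.eigenvalues ∈ Γ) (hBΓ : hB.eigenvalues ∈ Γ) {α β γ : ℝ} (hα : 0 ≤ α) (hβ : 0 ≤ β)
    (hαβ : 0 < α + β) (hγ : 0 ≤ γ) (b : ι → ℝ) :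
    ∃ hM : (α • A + β • B + γ • rankOneCorrection b).IsHermitian, hM.eigenvalues ∈ Γ := by
  refine ⟨((hA.smul (.all α)).add (hB.smul (.all β))).add
    ((isHermitian_rankOneCorrection b).smul (.all γ)), ?_⟩
  generalize_proofs hM
  have hW := hM.eigenvectorUnitary.2
  have hdiag := hM.eigenvalues_eq_diag_conj
  generalize (hM.eigenvectorUnitary : Matrix ι ι ℝ) = W at hW hdiag
  simp only [Matrix.mul_add, Matrix.add_mul, Matrix.mul_smul, Matrix.smul_mul, diag_add,
    diag_smul, star_mul_rankOneCorrection_mul hW, diag_rankOneCorrection, Finset.smul_sum,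
    smul_smul] at hdiag
  rw [hdiag]
  refine add_sum_smul_mem_of_cone hopen hconv hcone _ ?_ (fun j _ => by positivity)
    (fun j _ => hflip j)
  exact smul_add_smul_mem_of_cone hconv hcone
    (diag_conj_mem_of_eigenvalues_mem hconv hsymm hA hAΓ hW)
    (diag_conj_mem_of_eigenvalues_mem hconv hsymm hB hBΓ hW) hα hβ hαβ

end Admissible

section ConformalHessian

open Filter Topology

variable {n : ℕ} {u v : (Fin n → ℝ) → ℝ} {x : Fin n → ℝ} {t : ℝ}

theorem pd_add_mul_sub (hu : DifferentiableAt ℝ u x) (hv : DifferentiableAt ℝ v x) (i : Fin n) :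
    pd n (fun y => u y + t * (v y - u y)) x i = pd n u x i + t * (pd n v x i - pd n u x i) := by
  have h : HasFDerivAt (fun y => u y + t * (v y - u y))
      (fderiv ℝ u x + t • (fderiv ℝ v x - fderiv ℝ u x)) x :=
    hu.hasFDerivAt.add ((hv.hasFDerivAt.sub hu.hasFDerivAt).const_mul t)
  rw [pd, h.fderiv]
  rfl

theorem pd2_add_mul_sub (hu : ContDiffAt ℝ 2 u x) (hv : ContDiffAt ℝ 2 v x) (i j : Fin n) :
    pd2 n (fun y => u y + t * (v y - u y)) x i j
      = pd2 n u x i j + t * (pd2 n v x i j - pd2 n u x i j) := by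
  have hpd : (fun y => pd n (fun y => u y + t * (v y - u y)) y j)
      =ᶠ[𝓝 x] fun y => pd n u y j + t * (pd n v y j - pd n u y j) := by
    filter_upwards [hu.eventually (by simp), hv.eventually (by simp)] with y huy hvy
    exact pd_add_mul_sub (huy.differentiableAt two_ne_zero) (hvy.differentiableAt two_ne_zero) j
  have hdiff : ∀ {w : (Fin n → ℝ) → ℝ}, ContDiffAt ℝ 2 w x →
      DifferentiableAt ℝ (fun y => pd n w y j) x := fun hw =>
    ((hw.fderiv_right (by norm_num)).differentiableAt one_ne_zero).clm_apply
      (differentiableAt_const _)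
  change pd n (fun y => pd n _ y j) x i = pd n (fun y => pd n u y j) x i
    + t * (pd n (fun y => pd n v y j) x i - pd n (fun y => pd n u y j) x i)
  rw [pd, hpd.fderiv_eq, ← pd]
  exact pd_add_mul_sub (hdiff hu) (hdiff hv) i

theorem Amat_add_mul_sub (hu : ContDiffAt ℝ 2 u x) (hv : ContDiffAt ℝ 2 v x) :
    Amat n (fun y => u y + t * (v y - u y)) x
      = Real.exp (-(2 * (u x + t * (v x - u x)))) •
          (((1 - t) * Real.exp (2 * u x)) • Amat n u x + (t * Real.exp (2 * v x)) • Amat n v x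
            + (t * (1 - t)) • rankOneCorrection (fun k => pd n u x k - pd n v x k)) := by
  have hu1 := hu.differentiableAt two_ne_zero
  have hv1 := hv.differentiableAt two_ne_zero
  have hsum : ∑ k, (pd n u x k + t * (pd n v x k - pd n u x k)) ^ 2
      = (1 - t) * ∑ k, pd n u x k ^ 2 + t * ∑ k, pd n v x k ^ 2
        - t * (1 - t) * ∑ k, (pd n u x k - pd n v x k) * (pd n u x k - pd n v x k) := by
    simp only [Finset.mul_sum, ← Finset.sum_add_distrib, ← Finset.sum_sub_distrib]
    exact Finset.sum_congr rfl fun k _ => by ring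
  ext i j
  simp only [Amat, rankOneCorrection, Matrix.add_apply, Matrix.smul_apply, Matrix.sub_apply,
    Matrix.of_apply, one_apply, vecMulVec_apply, dotProduct, smul_eq_mul,
    pd_add_mul_sub hu1 hv1, pd2_add_mul_sub hu hv, hsum]
  simp only [Real.exp_neg]
  field_simp
  ring

end ConformalHessian

/-- Convexity of the admissible set for a general symmetric convex cone `Γ` with
`Γ + Γₙ ⊆ Γ` and `-λ* ∈ Γ̄`, `λ* = (1,-1,…,-1)`: if the eigenvalues of
`A[u](x₀)` and `A[v](x₀)` lie in `Γ`, so do those of `A[u + t(v-u)](x₀)`. -/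
theorem segment_admissible_general_cone
    (n : ℕ) (hn : 2 ≤ n)
    (Γ : Set (Fin n → ℝ)) (hopen : IsOpen Γ)
    (hsymm : ∀ σ : Equiv.Perm (Fin n), ∀ lam ∈ Γ, (lam ∘ σ) ∈ Γ)
    (hcone : ∀ lam ∈ Γ, ∀ t : ℝ, 0 < t → t • lam ∈ Γ)
    (hconv : Convex ℝ Γ)
    (lamStar : Fin n → ℝ) (hlamStar : lamStar = fun i => if i = ⟨0, by omega⟩ then 1 else -1)
    (hstar : -lamStar ∈ closure Γ)
    (u v : (Fin n → ℝ) → ℝ) (x0 : Fin n → ℝ)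
    (hu : ContDiffAt ℝ 2 u x0) (hv : ContDiffAt ℝ 2 v x0)
    (hHu : (Amat n u x0).IsHermitian) (hHv : (Amat n v x0).IsHermitian)
    (hAu : hHu.eigenvalues ∈ Γ) (hAv : hHv.eigenvalues ∈ Γ) :
    ∀ t ∈ Set.Icc (0:ℝ) 1,
      ∃ hH : (Amat n (fun x => u x + t * (v x - u x)) x0).IsHermitian,
        hH.eigenvalues ∈ Γ := by
  rintro t ⟨ht0, ht1⟩
  have hflip (j : Fin n) : (fun i => if i = j then (-1 : ℝ) else 1) ∈ closure Γ := by
    convert comp_perm_mem_closure hsymm (Equiv.swap j ⟨0, by omega⟩) hstar using 1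
    ext i
    by_cases h : i = j <;> simp [hlamStar, Equiv.swap_apply_eq_iff, h]
  have h1t : 0 ≤ 1 - t := sub_nonneg.mpr ht1
  have hα : 0 ≤ (1 - t) * Real.exp (2 * u x0) := mul_nonneg h1t (Real.exp_pos _).le
  have hβ : 0 ≤ t * Real.exp (2 * v x0) := mul_nonneg ht0 (Real.exp_pos _).le
  have hαβ : 0 < (1 - t) * Real.exp (2 * u x0) + t * Real.exp (2 * v x0) :=
    convex_Ioi (0 : ℝ) (Real.exp_pos _) (Real.exp_pos _) h1t ht0 (by ring)
  have hs := Real.exp_pos (-(2 * (u x0 + t * (v x0 - u x0))))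
  rw [Amat_add_mul_sub hu hv, smul_add, smul_add, smul_smul, smul_smul, smul_smul]
  refine eigenvalues_smul_add_smul_add_rankOneCorrection_mem hopen hconv hcone hsymm hflip
    hHu hHv hAu hAv (mul_nonneg hs.le hα) (mul_nonneg hs.le hβ) ?_
    (mul_nonneg hs.le (mul_nonneg ht0 h1t)) _
  rw [← mul_add]
  exact mul_pos hs hαβ
end

section
/- Let $u\equiv 0$ and $v(x)=-2\log|x|$ on $\mathbb{R}^n\setminus\{0\}$, and $w_t=u+t(v-u)=tv$. Then $A[u]\equiv 0$, $A[v]\equiv 0$, while for $t\in(0,1)$ the eigenvalues satisfy $\lambda(A[w_t])(x)=-2t(1-t)|x|^{-2}e^{-2w_t(x)}(1,-1,\dots,-1)$ up to permutation; in particular $e^{2w_t(x)}A[w_t](x)=2t(1-t)|x|^{-2}(I-2|x|^{-2}x\otimes x)$. -/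
/-!
With `S = |x|²`, the family is `w_t = -t log S`, so `∇w_t = -2t x / S` and
`∇²w_t = -2t (I - 2 x⊗x / S) / S`; hence `e^{2w_t} A[w_t] = 2t(1-t)/S · (I - 2 x⊗x / S)`,
which vanishes at `t = 0, 1`. This is a scalar `a` plus a rank-one matrix with trace `-2a`, and
shifting the characteristic polynomial `X^n - tr · X^(n-1)` of the rank-one part by `a` gives
the eigenvalues `a` (`n - 1` times) and `-a`.
-/

open scoped BigOperators

open Polynomial

namespace Matrix

variable {ι R : Type*} [Fintype ι] [DecidableEq ι] [CommRing R]

theorem charpoly_add_scalar (M : Matrix ι ι R) (a : R) :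
    (M + scalar ι a).charpoly = M.charpoly.comp (X - C a) := by
  rw [charpoly, charpoly, ← coe_compRingHom_apply, RingHom.map_det]
  congr 1
  ext i j : 1
  by_cases h : i = j
  · subst h
    simp only [charmatrix_apply_eq, add_apply, scalar_apply, diagonal_apply_eq,
      RingHom.mapMatrix_apply, map_apply, coe_compRingHom_apply, sub_comp, X_comp, C_comp, map_add]
    ring
  · simp [h]

theorem charpoly_scalar_add_vecMulVec [Nonempty ι] (a : R) (u v : ι → R) :
    (scalar ι a + vecMulVec u v).charpoly
      = (X - C a) ^ (Fintype.card ι - 1) * (X - C (a + u ⬝ᵥ v)) := by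
  obtain ⟨m, hm⟩ : ∃ m, Fintype.card ι = m + 1 := Nat.exists_eq_add_one.mpr Fintype.card_pos
  rw [add_comm, charpoly_add_scalar, charpoly_vecMulVec, hm, Nat.add_sub_cancel]
  simp only [smul_eq_C_mul, sub_comp, mul_comp, pow_comp, X_comp, C_comp, pow_succ, C_add]
  ring

end Matrix

open Real ContinuousLinearMap

section SumSq

variable {ι : Type*} [Fintype ι]

theorem sum_sq_ne_zero {x : ι → ℝ} (hx : x ≠ 0) : ∑ k, x k ^ 2 ≠ 0 := by
  obtain ⟨i, hi⟩ := Function.ne_iff.mp hx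
  exact (Finset.sum_pos' (fun k _ => sq_nonneg (x k))
    ⟨i, Finset.mem_univ i, sq_pos_of_ne_zero hi⟩).ne'

theorem sum_smul_proj_apply_single [DecidableEq ι] (a : ι → ℝ) (i : ι) :
    (∑ k, a k • proj k : (ι → ℝ) →L[ℝ] ℝ) (Pi.single i 1) = a i := by
  simp [Pi.single_apply]

theorem hasFDerivAt_sum_sq (x : ι → ℝ) :
    HasFDerivAt (fun y : ι → ℝ => ∑ k, y k ^ 2) (∑ k, (2 * x k) • proj k : (ι → ℝ) →L[ℝ] ℝ) x := by
  refine HasFDerivAt.fun_sum fun k _ => ?_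
  simpa [Function.comp_def] using
    (hasDerivAt_pow 2 (x k)).comp_hasFDerivAt x (proj k : (ι → ℝ) →L[ℝ] ℝ).hasFDerivAt

end SumSq

section LogSumSq

variable {n : ℕ}

theorem pd_const_mul_log_sum_sq (c : ℝ) {x : Fin n → ℝ} (hx : ∑ k, x k ^ 2 ≠ 0) (i : Fin n) :
    pd n (fun y => c * log (∑ k, y k ^ 2)) x i = 2 * c * (∑ k, x k ^ 2)⁻¹ * x i := by
  have hlog := ((hasFDerivAt_sum_sq x).log hx).const_mul c
  rw [pd, hlog.fderiv]
  simp only [smul_apply, sum_smul_proj_apply_single, smul_eq_mul]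
  ring

theorem pd2_const_mul_log_sum_sq (c : ℝ) {x : Fin n → ℝ} (hx : ∑ k, x k ^ 2 ≠ 0) (i j : Fin n) :
    pd2 n (fun y => c * log (∑ k, y k ^ 2)) x i j
      = 2 * c * (∑ k, x k ^ 2)⁻¹ * (if i = j then 1 else 0)
        - 4 * c * ((∑ k, x k ^ 2)⁻¹) ^ 2 * x i * x j := by
  have hnhds : ∀ᶠ y in nhds x, ∑ k, y k ^ 2 ≠ 0 :=
    (continuous_finsetSum _ fun k _ => (continuous_apply k).pow 2).continuousAt.eventually_ne hx
  have hpd : (fun y => fderiv ℝ (fun y => c * log (∑ k, y k ^ 2)) y (Pi.single j 1))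
      =ᶠ[nhds x] fun y => 2 * c * (∑ k, y k ^ 2)⁻¹ * y j :=
    hnhds.mono fun y hy => pd_const_mul_log_sum_sq c hy j
  have hinv := ((hasDerivAt_inv hx).comp_hasFDerivAt x (hasFDerivAt_sum_sq x)).const_mul (2 * c)
  simp only [Function.comp_def] at hinv
  rw [pd2, hpd.fderiv_eq, (hinv.fun_mul (hasFDerivAt_apply j x)).fderiv]
  simp only [add_apply, smul_apply, sum_smul_proj_apply_single, smul_eq_mul, proj_apply,
    Pi.single_apply, eq_comm (a := j)]
  split_ifs <;> ring

theorem Amat_mul_neg_log_sum_sq (t : ℝ) {x : Fin n → ℝ} (hx : ∑ k, x k ^ 2 ≠ 0) :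
    Amat n (fun y => t * -log (∑ k, y k ^ 2)) x
      = Matrix.scalar (Fin n)
          (2 * t * (1 - t) * (∑ k, x k ^ 2)⁻¹ * exp (-(2 * (t * -log (∑ k, x k ^ 2)))))
        + Matrix.vecMulVec
          ((-(4 * t * (1 - t)) * ((∑ k, x k ^ 2)⁻¹) ^ 2
            * exp (-(2 * (t * -log (∑ k, x k ^ 2))))) • x) x := by
  have hw : (fun y : Fin n → ℝ => t * -log (∑ k, y k ^ 2))
      = fun y => -t * log (∑ k, y k ^ 2) := by
    funext y; ring
  have hpd := pd_const_mul_log_sum_sq (-t) hx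
  have hpd2 := pd2_const_mul_log_sum_sq (-t) hx
  rw [← hw] at hpd hpd2
  have hgrad : ∑ k, pd n (fun y => t * -log (∑ k, y k ^ 2)) x k ^ 2
      = 4 * t ^ 2 * (∑ k, x k ^ 2)⁻¹ := by
    simp only [hpd, mul_pow, ← Finset.mul_sum]
    field_simp
    ring
  ext i j
  rw [Amat, Matrix.of_apply, hgrad, hpd2, hpd, hpd]
  simp only [Matrix.add_apply, Matrix.scalar_apply, Matrix.diagonal_apply, Matrix.vecMulVec_apply,
    Pi.smul_apply, smul_eq_mul]
  split_ifs <;> ring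

end LogSumSq

/-- Counterexample to convexity for cones with `-λ* ∉ Γ̄`: for `u ≡ 0`,
`v = -2log|x|`, `w_t = tv`, one has `A[u] ≡ 0`, `A[v] ≡ 0`, while
`e^{2w_t}A[w_t](x) = 2t(1-t)|x|⁻²(I - 2|x|⁻² x⊗x)`, whose eigenvalues are
`-2t(1-t)|x|⁻²e^{-2w_t}·(1,-1,…,-1)` up to permutation (expressed via the
characteristic polynomial). -/
theorem convexity_counterexample
    (n : ℕ) (hn : 1 ≤ n)
    (u v : (Fin n → ℝ) → ℝ) (hu : u = fun _ => 0)
    (hv : v = fun x => -2 * Real.log (Real.sqrt (∑ k, x k ^ 2))) :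
    ∀ x : Fin n → ℝ, x ≠ 0 →
      Amat n u x = 0
      ∧ Amat n v x = 0
      ∧ ∀ t ∈ Set.Ioo (0:ℝ) 1,
          (∀ i j, Real.exp (2 * (t * v x)) * Amat n (fun y => t * v y) x i j
              = 2 * t * (1 - t) * (∑ k, x k ^ 2)⁻¹ *
                  ((if i = j then 1 else 0) - 2 * (∑ k, x k ^ 2)⁻¹ * x i * x j))
          ∧ (Amat n (fun y => t * v y) x).charpoly
              = (Polynomial.X - Polynomial.C
                    (2 * t * (1 - t) * (∑ k, x k ^ 2)⁻¹ * Real.exp (-(2 * (t * v x))))) ^ (n - 1)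
                  * (Polynomial.X + Polynomial.C
                    (2 * t * (1 - t) * (∑ k, x k ^ 2)⁻¹ * Real.exp (-(2 * (t * v x))))) := by
  have hv' : v = fun y => -log (∑ k, y k ^ 2) := by
    rw [hv]; funext y
    rw [log_sqrt (Finset.sum_nonneg fun k _ => sq_nonneg (y k))]
    ring
  subst hu hv'
  intro x hx
  have hS := sum_sq_ne_zero hx
  have : Nonempty (Fin n) := ⟨⟨0, hn⟩⟩
  refine ⟨by simpa using Amat_mul_neg_log_sum_sq 0 hS, by simpa using Amat_mul_neg_log_sum_sq 1 hS,
    fun t _ => ⟨fun i j => ?_, ?_⟩⟩ <;> beta_reduce <;> rw [Amat_mul_neg_log_sum_sq t hS]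
  · set w := t * -log (∑ k, x k ^ 2)
    simp only [Matrix.add_apply, Matrix.scalar_apply, Matrix.diagonal_apply, Matrix.vecMulVec_apply,
      Pi.smul_apply, smul_eq_mul, exp_neg]
    split_ifs <;> field_simp <;> ring
  · have hdot : x ⬝ᵥ x = ∑ k, x k ^ 2 := by simp only [dotProduct, sq]
    rw [Matrix.charpoly_scalar_add_vecMulVec, Fintype.card_fin, smul_dotProduct, hdot, smul_eq_mul]
    congr 1
    rw [sub_eq_add_neg, ← C_neg]
    congr 2
    field_simp
    ring
end
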